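/- Let p ∈ {2,...,n} and μ ∈ Γ_p with μ_1 ≤ μ_2 ≤ ... ≤ μ_n. Then the partial derivatives of σ_p satisfy the monotonicity σ_{p-1}(μ|1) ≥ σ_{p-1}(μ|2) ≥ ... ≥ σ_{p-1}(μ|n) > 0, and moreover μ_n σ_{p-1}(μ|n) ≥ (p/n) σ_p(μ). -/

import Mathlib

/-- The `p`-th elementary symmetric polynomial of `μ : Fin n → ℝ`. -/
noncomputable def esymm (n p : ℕ) (μ : Fin n → ℝ) : ℝ :=
  ∑ t ∈ Finset.powersetCard p Finset.univ, ∏ i ∈ t, μ i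

/-- The `p`-th Gårding cone in `ℝⁿ`. -/
def gardingCone (n p : ℕ) : Set (Fin n → ℝ) :=
  {μ | ∀ q, 1 ≤ q → q ≤ p → 0 < esymm n q μ}

/-!
Everything rests on the splitting `σ_{q+1}(μ) = σ_{q+1}(μ|i) + μ_i σ_q(μ|i)` and on Newton's
inequality `σ_k σ_{k+2} ≤ σ_{k+1}²`, valid for every real vector: differentiate `∏ (X + μ_i)` down
to degree `k + 2`, and note that the low coefficients of a real-rooted polynomial satisfy
`2 c₀ c₂ ≤ c₁²`. Newton's inequality shows, by induction on `k`, that deleting an entry maps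
`Γ_{k+1}` into `Γ_k`; with `σ_q(μ|j) - σ_q(μ|k) = (μ_k - μ_j) σ_{q-1}(μ|jk)` this gives the
monotonicity and the positivity. For the last inequality split `σ_p(μ)` at the largest entry `μ_n`:
if `σ_p(μ|n) > 0` then `μ|n ∈ Γ_p`, all `σ_{p-1}(μ|in)` are positive, and
`p σ_p(μ|n) = ∑ μ_i σ_{p-1}(μ|in) ≤ μ_n ∑ σ_{p-1}(μ|in) = (n - p) μ_n σ_{p-1}(μ|n)`;
otherwise this bound is trivial.
-/

open Finset Polynomial

namespace Polynomial

theorem Splits.derivative {f : ℝ[X]} (hf : f.Splits) : f.derivative.Splits := by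
  rw [splits_iff_card_roots] at hf ⊢
  have := card_roots_le_derivative f
  have := card_roots' (Polynomial.derivative f)
  have := natDegree_derivative_le f
  omega

theorem Splits.iterate_derivative {f : ℝ[X]} (hf : f.Splits) (d : ℕ) :
    (Polynomial.derivative^[d] f).Splits := by
  induction d with
  | zero => exact hf
  | succ d ih => rw [Function.iterate_succ_apply']; exact ih.derivative

theorem two_mul_coeff_zero_mul_coeff_two_le_prod_X_sub_C (s : Multiset ℝ) :
    2 * (s.map (X - C ·)).prod.coeff 0 * (s.map (X - C ·)).prod.coeff 2 ≤
      (s.map (X - C ·)).prod.coeff 1 ^ 2 := by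
  induction s using Multiset.induction with
  | empty => simp [coeff_one]
  | cons a s ih =>
    rw [Multiset.map_cons, Multiset.prod_cons, sub_mul]
    generalize (s.map (X - C ·)).prod = Q at ih ⊢
    have h1 : (X * Q).coeff 1 = Q.coeff 0 := coeff_X_mul Q 0
    have h2 : (X * Q).coeff 2 = Q.coeff 1 := coeff_X_mul Q 1
    simp only [coeff_sub, coeff_X_mul_zero, coeff_C_mul, h1, h2]
    -- the new value of `c₁² - 2 c₀ c₂` is `c₀² + a² (c₁² - 2 c₀ c₂)`
    nlinarith [sq_nonneg (Q.coeff 0), mul_le_mul_of_nonneg_left ih (sq_nonneg a)]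

theorem Splits.two_mul_coeff_zero_mul_coeff_two_le {f : ℝ[X]} (hf : f.Splits) :
    2 * f.coeff 0 * f.coeff 2 ≤ f.coeff 1 ^ 2 := by
  rw [hf.eq_prod_roots]
  simp only [coeff_C_mul]
  nlinarith [mul_le_mul_of_nonneg_left (two_mul_coeff_zero_mul_coeff_two_le_prod_X_sub_C f.roots)
    (sq_nonneg f.leadingCoeff)]

end Polynomial

namespace Multiset

theorem esymm_eq_zero_of_card_lt {R : Type*} [CommSemiring R] {s : Multiset R} {k : ℕ}
    (h : card s < k) : s.esymm k = 0 := by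
  simp [esymm, powersetCard_eq_empty k h]

theorem esymm_cons_succ {R : Type*} [CommSemiring R] (a : R) (s : Multiset R) (k : ℕ) :
    (a ::ₘ s).esymm (k + 1) = s.esymm (k + 1) + a * s.esymm k := by
  simp only [esymm, powersetCard_cons, map_add, sum_add, map_map, Function.comp_def, prod_cons,
    sum_map_mul_left]

theorem esymm_mul_esymm_le_sq (s : Multiset ℝ) (k : ℕ) :
    s.esymm k * s.esymm (k + 2) ≤ s.esymm (k + 1) ^ 2 := by
  obtain hlt | ⟨d, hd⟩ : card s < k + 2 ∨ ∃ d, card s = d + (k + 2) :=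
    (lt_or_ge _ _).imp_right fun h => ⟨card s - (k + 2), by omega⟩
  · rw [esymm_eq_zero_of_card_lt hlt, mul_zero]
    positivity
  -- Differentiating `∏ (X + a)` `d` times keeps it real-rooted and brings `e_{k+2}`, `e_{k+1}`,
  -- `e_k` down to the coefficients of `1`, `X`, `X²`.
  set P := (s.map fun a => X + C a).prod
  have hP : P.Splits := Splits.multisetProd (by simp [Splits.X_add_C])
  have hcoeff (j : ℕ) (hj : j ≤ 2) : (Polynomial.derivative^[d] P).coeff j =
      (d + j).descFactorial d * s.esymm (k + 2 - j) := by
    rw [coeff_iterate_derivative, nsmul_eq_mul, prod_X_add_C_coeff s (by omega), hd, add_comm j d,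
      show d + (k + 2) - (d + j) = k + 2 - j by omega]
  have hR := (hP.iterate_derivative d).two_mul_coeff_zero_mul_coeff_two_le
  rw [hcoeff 0 (by omega), hcoeff 1 (by omega), hcoeff 2 (by omega)] at hR
  simp only [add_zero, Nat.sub_zero, Nat.add_sub_cancel, show k + 2 - 1 = k + 1 by omega] at hR
  have h1 := Nat.succ_descFactorial d d
  have h2 := Nat.succ_descFactorial (d + 1) d
  rw [Nat.add_sub_cancel_left, one_mul] at h1
  rw [show d + 1 + 1 - d = 2 by omega, show d + 1 + 1 = d + 2 from rfl, h1] at h2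
  set D := d.descFactorial d
  have hD : 0 < ((d : ℝ) + 1) * (D : ℝ) ^ 2 := by
    have : 0 < D := by simp only [D, Nat.descFactorial_self]; positivity
    positivity
  have h2' : 2 * ((d + 2).descFactorial d : ℝ) = (d + 2) * ((d + 1) * D) := by exact_mod_cast h2
  rw [h1] at hR
  push_cast at hR
  have key : (d + 2) * (s.esymm k * s.esymm (k + 2)) ≤ (d + 1) * s.esymm (k + 1) ^ 2 := by
    refine le_of_mul_le_mul_left ?_ hD
    linear_combination hR - (D : ℝ) * s.esymm k * s.esymm (k + 2) * h2'
  nlinarith [sq_nonneg (s.esymm (k + 1))]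

end Multiset

section esymmOn

variable {ι : Type*} {A : Finset ι} {q : ℕ} {μ : ι → ℝ}

/-- `σ_q` of the entries of `μ` indexed by `A`; the paper's `σ_q(μ|j)` is
`esymmOn (univ.erase j) q μ`. -/
noncomputable def esymmOn (A : Finset ι) (q : ℕ) (μ : ι → ℝ) : ℝ :=
  ∑ t ∈ A.powersetCard q, ∏ i ∈ t, μ i

theorem esymmOn_eq_esymm (A : Finset ι) (q : ℕ) (μ : ι → ℝ) :
    esymmOn A q μ = (A.val.map μ).esymm q :=
  (A.esymm_map_val μ q).symm

@[simp]
theorem esymmOn_zero (A : Finset ι) (μ : ι → ℝ) : esymmOn A 0 μ = 1 := by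
  simp [esymmOn]

theorem esymmOn_one (A : Finset ι) (μ : ι → ℝ) : esymmOn A 1 μ = ∑ i ∈ A, μ i := by
  simp [esymmOn, powersetCard_one]

theorem le_card_of_esymmOn_ne_zero (h : esymmOn A q μ ≠ 0) : q ≤ #A := by
  contrapose! h
  simp [esymmOn, powersetCard_eq_empty.2 h]

theorem esymmOn_congr {ν : ι → ℝ} (h : ∀ i ∈ A, μ i = ν i) : esymmOn A q μ = esymmOn A q ν :=
  sum_congr rfl fun _ ht => prod_congr rfl fun i hi => h i ((mem_powersetCard.1 ht).1 hi)

theorem esymmOn_mul_esymmOn_le_sq (A : Finset ι) (k : ℕ) (μ : ι → ℝ) :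
    esymmOn A k μ * esymmOn A (k + 2) μ ≤ esymmOn A (k + 1) μ ^ 2 := by
  simp only [esymmOn_eq_esymm, Multiset.esymm_mul_esymm_le_sq]

variable [DecidableEq ι] {i j : ι}

theorem esymmOn_succ_of_mem (hi : i ∈ A) (q : ℕ) (μ : ι → ℝ) :
    esymmOn A (q + 1) μ = esymmOn (A.erase i) (q + 1) μ + μ i * esymmOn (A.erase i) q μ := by
  rw [esymmOn_eq_esymm, ← insert_erase hi, insert_val_of_notMem (notMem_erase i A),
    Multiset.map_cons, Multiset.esymm_cons_succ, erase_insert_eq_erase, erase_idem,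
    esymmOn_eq_esymm, esymmOn_eq_esymm]

theorem esymmOn_update_zero (hi : i ∈ A) (q : ℕ) (μ : ι → ℝ) :
    esymmOn A q (Function.update μ i 0) = esymmOn (A.erase i) q μ := by
  have hagree : ∀ j ∈ A.erase i, Function.update μ i 0 j = μ j :=
    fun j hj => Function.update_of_ne (ne_of_mem_erase hj) 0 μ
  cases q with
  | zero => simp
  | succ q =>
    rw [esymmOn_succ_of_mem hi, Function.update_self, zero_mul, add_zero, esymmOn_congr hagree]

theorem sum_esymmOn_erase (A : Finset ι) (q : ℕ) (μ : ι → ℝ) :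
    ∑ i ∈ A, esymmOn (A.erase i) q μ = (#A - q : ℝ) * esymmOn A q μ := by
  have hsplit (i : ι) : esymmOn (A.erase i) q μ =
      ∑ t ∈ A.powersetCard q, if i ∈ t then 0 else ∏ j ∈ t, μ j := by
    rw [esymmOn, sum_ite, sum_const_zero, zero_add]
    congr 1
    ext
    simp only [mem_powersetCard, mem_filter, subset_erase]
    tauto
  rw [sum_congr rfl fun i _ => hsplit i, sum_comm, esymmOn, mul_sum]
  refine sum_congr rfl fun t ht => ?_
  obtain ⟨htA, htq⟩ := mem_powersetCard.1 ht
  rw [sum_ite, sum_const_zero, zero_add, sum_const, nsmul_eq_mul, ← sdiff_eq_filter,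
    card_sdiff_of_subset htA, htq, Nat.cast_sub (htq ▸ card_le_card htA)]

theorem sum_mul_esymmOn_erase (A : Finset ι) (q : ℕ) (μ : ι → ℝ) :
    ∑ i ∈ A, μ i * esymmOn (A.erase i) q μ = (q + 1) * esymmOn A (q + 1) μ := by
  have hterm : ∀ i ∈ A, μ i * esymmOn (A.erase i) q μ =
      esymmOn A (q + 1) μ - esymmOn (A.erase i) (q + 1) μ := fun i hi => by
    rw [esymmOn_succ_of_mem hi]; ring
  rw [sum_congr rfl hterm, sum_sub_distrib, sum_const, nsmul_eq_mul, sum_esymmOn_erase]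
  push_cast
  ring

theorem esymmOn_erase_sub_esymmOn_erase (hi : i ∈ A) (hj : j ∈ A) (hij : i ≠ j) (q : ℕ)
    (μ : ι → ℝ) :
    esymmOn (A.erase i) (q + 1) μ - esymmOn (A.erase j) (q + 1) μ =
      (μ j - μ i) * esymmOn ((A.erase i).erase j) q μ := by
  rw [esymmOn_succ_of_mem (mem_erase.2 ⟨hij.symm, hj⟩),
    esymmOn_succ_of_mem (mem_erase.2 ⟨hij, hi⟩), erase_right_comm]
  ring

end esymmOn

section gardingConeOn

variable {ι : Type*} {A : Finset ι} {q k : ℕ} {μ : ι → ℝ} {M : ℝ}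

def gardingConeOn (A : Finset ι) (k : ℕ) : Set (ι → ℝ) :=
  {μ | ∀ q, 1 ≤ q → q ≤ k → 0 < esymmOn A q μ}

theorem esymmOn_pos (hμ : μ ∈ gardingConeOn A k) (hq : q ≤ k) : 0 < esymmOn A q μ := by
  rcases Nat.eq_zero_or_pos q with rfl | hq0
  · simp
  · exact hμ q hq0 hq

theorem gardingConeOn_anti (A : Finset ι) : Antitone (gardingConeOn A) :=
  fun _ _ hkl _ hμ q hq1 hqk => hμ q hq1 (hqk.trans hkl)

theorem mem_gardingConeOn_succ (hμ : μ ∈ gardingConeOn A k) (hpos : 0 < esymmOn A (k + 1) μ) :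
    μ ∈ gardingConeOn A (k + 1) := fun q hq1 hqk => by
  rcases hqk.lt_or_eq with hlt | rfl
  · exact hμ q hq1 (Nat.lt_succ_iff.1 hlt)
  · exact hpos

theorem pos_of_forall_le_of_mem_gardingConeOn (hμ : μ ∈ gardingConeOn A 1)
    (hM : ∀ i ∈ A, μ i ≤ M) : 0 < M := by
  have hsum : 0 < ∑ i ∈ A, μ i := esymmOn_one A μ ▸ hμ 1 le_rfl le_rfl
  have hle : ∑ i ∈ A, μ i ≤ #A * M := by simpa using sum_le_sum hM
  nlinarith [(#A).cast_nonneg (α := ℝ)]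

variable [DecidableEq ι] {i j m : ι}

theorem mem_gardingConeOn_erase (hμ : μ ∈ gardingConeOn A (k + 1)) (hi : i ∈ A) :
    μ ∈ gardingConeOn (A.erase i) k := by
  induction k with
  | zero => exact fun q hq1 hq0 => absurd (hq1.trans hq0) (by omega)
  | succ k ih =>
    have hlow := ih (gardingConeOn_anti A (by omega) hμ)
    refine mem_gardingConeOn_succ hlow ?_
    have ha := esymmOn_pos hlow le_rfl
    have hk1 := esymmOn_succ_of_mem hi k μ
    have hk2 := esymmOn_succ_of_mem hi (k + 1) μ
    have hA1 := hμ (k + 1) (by omega) (by omega)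
    have hA2 := hμ (k + 2) (by omega) le_rfl
    have hnewton := esymmOn_mul_esymmOn_le_sq (A.erase i) k μ
    by_contra! hb
    -- `σ_{k+1}(μ) > 0` and `σ_{k+2}(μ) > 0` with `σ_{k+1}(μ|i) ≤ 0` force
    -- `σ_k(μ|i) σ_{k+2}(μ|i) > σ_{k+1}(μ|i)²`, against Newton's inequality.
    nlinarith [mul_nonneg ha.le (neg_nonneg.2 hb)]

theorem esymmOn_erase_antitone (hμ : μ ∈ gardingConeOn A (k + 1)) (hi : i ∈ A) (hj : j ∈ A)
    (hij : μ i ≤ μ j) : esymmOn (A.erase j) k μ ≤ esymmOn (A.erase i) k μ := by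
  obtain rfl | hne := eq_or_ne i j
  · exact le_rfl
  cases k with
  | zero => simp
  | succ k =>
    have hface :=
      mem_gardingConeOn_erase (mem_gardingConeOn_erase hμ hi) (mem_erase.2 ⟨hne.symm, hj⟩)
    have hdiff := esymmOn_erase_sub_esymmOn_erase hi hj hne k μ
    nlinarith [mul_nonneg (sub_nonneg.2 hij) (esymmOn_pos hface le_rfl).le]

theorem succ_mul_esymmOn_succ_le (hμ : μ ∈ gardingConeOn A k) (hM : ∀ i ∈ A, μ i ≤ M)
    (hM0 : 0 ≤ M) : (k + 1) * esymmOn A (k + 1) μ ≤ (#A - k) * M * esymmOn A k μ := by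
  have hk := esymmOn_pos hμ le_rfl
  rcases le_or_gt (esymmOn A (k + 1) μ) 0 with hnonpos | hpos
  · have hcard : (k : ℝ) ≤ #A := by exact_mod_cast le_card_of_esymmOn_ne_zero hk.ne'
    have : 0 ≤ (#A - k) * M * esymmOn A k μ := by
      have := sub_nonneg.2 hcard
      positivity
    nlinarith
  · have hface (i) (hi : i ∈ A) : 0 < esymmOn (A.erase i) k μ :=
      esymmOn_pos (mem_gardingConeOn_erase (mem_gardingConeOn_succ hμ hpos) hi) le_rfl
    calc (k + 1) * esymmOn A (k + 1) μ = ∑ i ∈ A, μ i * esymmOn (A.erase i) k μ :=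
          (sum_mul_esymmOn_erase A k μ).symm
      _ ≤ ∑ i ∈ A, M * esymmOn (A.erase i) k μ :=
          sum_le_sum fun i hi => mul_le_mul_of_nonneg_right (hM i hi) (hface i hi).le
      _ = (#A - k) * M * esymmOn A k μ := by rw [← mul_sum, sum_esymmOn_erase]; ring

theorem succ_mul_esymmOn_succ_le_card_mul (hμ : μ ∈ gardingConeOn A (k + 1)) (hm : m ∈ A)
    (hmax : ∀ i ∈ A, μ i ≤ μ m) :
    (k + 1) * esymmOn A (k + 1) μ ≤ #A * (μ m * esymmOn (A.erase m) k μ) := by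
  have hm0 := pos_of_forall_le_of_mem_gardingConeOn (gardingConeOn_anti A (by omega) hμ) hmax
  have hface := succ_mul_esymmOn_succ_le (mem_gardingConeOn_erase hμ hm)
    (fun i hi => hmax i (mem_of_mem_erase hi)) hm0.le
  rw [card_erase_of_mem hm, Nat.cast_pred (card_pos.2 ⟨m, hm⟩)] at hface
  rw [esymmOn_succ_of_mem hm]
  linear_combination hface

end gardingConeOn

theorem stmt_5 (n p : ℕ) (hp : 2 ≤ p) (hpn : p ≤ n)
    (μ : Fin n → ℝ) (hμ : μ ∈ gardingCone n p) (hmono : Monotone μ) :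
    (∀ j k : Fin n, j ≤ k →
      esymm n (p - 1) (Function.update μ k 0) ≤ esymm n (p - 1) (Function.update μ j 0)) ∧
    (∀ j : Fin n, 0 < esymm n (p - 1) (Function.update μ j 0)) ∧
    ((p : ℝ) / (n : ℝ) * esymm n p μ
      ≤ μ ⟨n - 1, by omega⟩ *
          esymm n (p - 1) (Function.update μ (⟨n - 1, by omega⟩ : Fin n) 0)) := by
  obtain ⟨k, rfl⟩ : ∃ k, p = k + 1 := ⟨p - 1, by omega⟩
  have hμ' : μ ∈ gardingConeOn univ (k + 1) := hμ
  have hupdate (j : Fin n) : esymm n k (Function.update μ j 0) = esymmOn (univ.erase j) k μ :=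
    esymmOn_update_zero (mem_univ j) k μ
  simp only [Nat.add_sub_cancel, hupdate]
  refine ⟨fun j l hjl => esymmOn_erase_antitone hμ' (mem_univ j) (mem_univ l) (hmono hjl),
    fun j => esymmOn_pos (mem_gardingConeOn_erase hμ' (mem_univ j)) le_rfl, ?_⟩
  set m : Fin n := ⟨n - 1, by omega⟩
  have hmax : ∀ i ∈ univ, μ i ≤ μ m := fun i _ => hmono (Nat.le_sub_one_of_lt i.isLt)
  have key : (k + 1) * esymm n (k + 1) μ ≤ n * (μ m * esymmOn (univ.erase m) k μ) := by
    have := succ_mul_esymmOn_succ_le_card_mul hμ' (mem_univ m) hmax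
    rwa [card_univ, Fintype.card_fin] at this
  rw [div_mul_eq_mul_div, div_le_iff₀ (by exact_mod_cast (show 0 < n by omega))]
  push_cast
  linarith
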